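/- Let Λ be the preprojective algebra of type A_n (n ≥ 2) over a field k, with the standard quiver presentation. Let ι be the automorphism with ι(e_i) = e_{n+1-i}, ι(a_i) = b_{n-i}, ι(b_i) = a_{n-i}. Then Inn(Λ) ∩ ⟨ι⟩ = 1 in Aut(Λ); in particular ι is not an inner automorphism of Λ. -/
import Mathlib


universe u

/-- The defining relations of the preprojective algebra of type `A_n`
(vertices `e 0, …, e (n-1)`, arrows `a i : i → i+1`, `b i : i+1 → i`),
for a system of elements of a `k`-algebra `B`. -/
def PreprojRels (k : Type u) [CommRing k] (B : Type u) [Ring B] [Algebra k B]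
    (n : ℕ) (e a b : ℕ → B) : Prop :=
  (∀ i j, i < n → j < n → e i * e j = if i = j then e i else 0) ∧
  (∑ i ∈ Finset.range n, e i = 1) ∧
  (∀ i, i + 1 < n → a i = e i * a i * e (i + 1)) ∧
  (∀ i, i + 1 < n → b i = e (i + 1) * b i * e i) ∧
  (∀ i, n ≤ i + 1 → a i = 0 ∧ b i = 0) ∧
  (a 0 * b 0 = 0) ∧
  (∀ i, i + 2 < n → a (i + 1) * b (i + 1) = b i * a i) ∧
  (2 ≤ n → b (n - 2) * a (n - 2) = 0)

/-- A presentation of `Λ` as the preprojective algebra of type `A_n` over `k`: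
generators satisfying the relations, generating `Λ`, and a universal property. -/
structure PreprojectivePresentation (k : Type u) [CommRing k]
    (Λ : Type u) [Ring Λ] [Algebra k Λ] (n : ℕ) where
  e : ℕ → Λ
  a : ℕ → Λ
  b : ℕ → Λ
  rels : PreprojRels k Λ n e a b
  gen : Algebra.adjoin k
      ({x | ∃ i < n, x = e i} ∪ {x | ∃ i, i + 1 < n ∧ (x = a i ∨ x = b i)}) = ⊤
  universal : ∀ (B : Type u) [Ring B] [Algebra k B] (e' a' b' : ℕ → B),
    PreprojRels k B n e' a' b' →
    ∃ φ : Λ →ₐ[k] B, (∀ i, i < n → φ (e i) = e' i) ∧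
      (∀ i, i + 1 < n → φ (a i) = a' i ∧ φ (b i) = b' i)


/-- Let `Λ` be the preprojective algebra of type `A_n`
(`n ≥ 2`) and `ι` the automorphism with `ι(e_i) = e_{n+1-i}`,
`ι(a_i) = b_{n-i}`, `ι(b_i) = a_{n-i}` (written here with `0`-based indices).
Then `Inn(Λ) ∩ ⟨ι⟩ = 1`; in particular `ι` is not inner. -/
theorem inner_inter_iota_trivial
    (k : Type u) [Field k] (Λ : Type u) [Ring Λ] [Algebra k Λ] (n : ℕ) (hn : 2 ≤ n)
    (pp : PreprojectivePresentation k Λ n)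
    (ι : Λ ≃ₐ[k] Λ)
    (hιe : ∀ i, i < n → ι (pp.e i) = pp.e (n - 1 - i))
    (hιa : ∀ i, i + 1 < n → ι (pp.a i) = pp.b (n - 2 - i))
    (hιb : ∀ i, i + 1 < n → ι (pp.b i) = pp.a (n - 2 - i)) :
    (∀ g : Λ ≃ₐ[k] Λ, g ∈ Subgroup.zpowers ι →
      (∃ u : Λˣ, ∀ x : Λ, g x = ↑u * x * ↑u⁻¹) → g = 1) ∧
    ¬ (∃ u : Λˣ, ∀ x : Λ, ι x = ↑u * x * ↑u⁻¹) := by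
  -- ι is not inner
  have key : ¬ (∃ u : Λˣ, ∀ x : Λ, ι x = ↑u * x * ↑u⁻¹) := by
    rintro ⟨u, hu⟩
    set e' : ℕ → (Fin n → k) := fun i j => if (j : ℕ) = i then 1 else 0 with he'
    have hrels : PreprojRels k (Fin n → k) n e' (fun _ => 0) (fun _ => 0) := by
      refine ⟨?_, ?_, by intros; simp, by intros; simp, by intros; simp,
        by simp, by intros; simp, by intros; simp⟩
      · intro i j hi hj
        by_cases h : i = j
        · subst h
          funext t
          simp only [he', Pi.mul_apply]
          by_cases ht : (t : ℕ) = i <;> simp [ht]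
        · rw [if_neg h]
          funext t
          simp only [he', Pi.mul_apply, Pi.zero_apply]
          by_cases ht : (t : ℕ) = i
          · rw [if_pos ht, if_neg (by omega), one_mul]
          · rw [if_neg ht, zero_mul]
      · funext t
        rw [Finset.sum_apply]
        simp only [he']
        rw [Finset.sum_ite_eq (Finset.range n) (t : ℕ) (fun _ => (1 : k))]
        simp [t.isLt]
    obtain ⟨φ, hφe, -⟩ := pp.universal (Fin n → k) e' (fun _ => 0) (fun _ => 0) hrels
    have h0 : φ (pp.e 0) = e' 0 := hφe 0 (by omega)
    have h1 : φ (pp.e (n - 1)) = e' (n - 1) := hφe (n - 1) (by omega)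
    have hx := hu (pp.e 0)
    rw [hιe 0 (by omega), Nat.sub_zero] at hx
    have h2 : φ (pp.e (n - 1)) = φ ↑u * φ (pp.e 0) * φ ↑u⁻¹ := by
      rw [hx, map_mul, map_mul]
    rw [mul_comm (φ ↑u) (φ (pp.e 0)), mul_assoc, ← map_mul, Units.mul_inv, map_one,
      mul_one, h0, h1] at h2
    have h3 := congrFun h2 ⟨0, by omega⟩
    simp [he', show (0 : ℕ) ≠ n - 1 by omega] at h3
  refine ⟨?_, key⟩
  -- ι squares to the identity
  have hsq : ∀ x : Λ, ι (ι x) = x := by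
    intro x
    have hx : x ∈ Algebra.adjoin k
        ({x | ∃ i < n, x = pp.e i} ∪ {x | ∃ i, i + 1 < n ∧ (x = pp.a i ∨ x = pp.b i)}) := by
      rw [pp.gen]; exact Algebra.mem_top
    induction hx using Algebra.adjoin_induction with
    | mem y hy =>
      rcases hy with ⟨i, hi, rfl⟩ | ⟨i, hi, rfl | rfl⟩
      · rw [hιe i hi, hιe (n - 1 - i) (by omega)]
        congr 1; omega
      · rw [hιa i hi, hιb (n - 2 - i) (by omega)]
        congr 1; omega
      · rw [hιb i hi, hιa (n - 2 - i) (by omega)]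
        congr 1; omega
    | algebraMap r => rw [ι.commutes, ι.commutes]
    | add y z _ _ hy hz => rw [map_add, map_add, hy, hz]
    | mul y z _ _ hy hz => rw [map_mul, map_mul, hy, hz]
  have hι2 : ι * ι = 1 := by
    ext x
    exact hsq x
  intro g hg hinner
  obtain ⟨m, rfl⟩ := hg
  replace hinner : ∃ u : Λˣ, ∀ x : Λ, (ι ^ m) x = ↑u * x * ↑u⁻¹ := hinner
  show ι ^ m = 1
  rcases Int.even_or_odd m with ⟨c, rfl⟩ | ⟨c, rfl⟩
  · have : ι ^ (c + c) = 1 := by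
      rw [← two_mul, zpow_mul, show (ι : Λ ≃ₐ[k] Λ) ^ (2 : ℤ) = 1 by
        rw [zpow_two, hι2], one_zpow]
    rw [this]
  · have h4 : ι ^ (2 * c + 1) = ι := by
      rw [zpow_add, zpow_mul, show (ι : Λ ≃ₐ[k] Λ) ^ (2 : ℤ) = 1 by
        rw [zpow_two, hι2], one_zpow, one_mul, zpow_one]
    rw [h4] at hinner ⊢
    exact absurd hinner key
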